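/- arXiv:2307.02675 — 5 statements merged into one kernel-verified Lean document; each statement's English description precedes it below -/
import Mathlib

section
/- Let q₋, q₊, Λ be polynomials over ℂ and ζ ∈ ℂ satisfying q₋′·q₊ − q₋·q₊′ + 2ζ·q₋·q₊ = Λ. If w is a root of q₊ with Λ(w) ≠ 0, then 2ζ + Λ′(w)/Λ(w) = q₊″(w)/q₊′(w). -/
open Polynomial

/-- Local form of the sl(2) Bethe equation at a nondegenerate root of `qp`. -/
theorem sl2_bethe_local (qm qp Λ : Polynomial ℂ) (ζ : ℂ)
    (h : derivative qm * qp - qm * derivative qp + C (2 * ζ) * (qm * qp) = Λ)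
    (w : ℂ) (hw : qp.eval w = 0) (hΛ : Λ.eval w ≠ 0) :
    2 * ζ + (derivative Λ).eval w / Λ.eval w
      = (derivative (derivative qp)).eval w / (derivative qp).eval w := by
  have h0 := congrArg (eval w) h
  simp [hw] at h0
  have hd := congrArg (fun p => eval w (derivative p)) h
  simp [derivative_mul, derivative_sub, derivative_add, hw] at hd
  have ha : qm.eval w ≠ 0 := by
    intro hz; apply hΛ; rw [← h0, hz]; ring
  have hb : (derivative qp).eval w ≠ 0 := by
    intro hz; apply hΛ; rw [← h0, hz]; ring
  rw [← h0, ← hd]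
  field_simp
  ring
end

section
/- Let ζ ∈ ℂ, let Λ be a polynomial over ℂ, let q₊(z) = ∏_{m=1}^{N}(z − w_m) have pairwise distinct roots none of which is a root of Λ, and suppose there is a polynomial q₋ with q₋′q₊ − q₋q₊′ + 2ζ q₋q₊ = Λ. Then the roots w_ℓ satisfy the sl(2) Gaudin Bethe equations: for every ℓ, 2ζ + Λ′(w_ℓ)/Λ(w_ℓ) = ∑_{m ≠ ℓ} 2/(w_ℓ − w_m). -/
open Polynomial Finset

/-!
Evaluating the qq-system and its derivative at a root `a` of `q₊` gives
`Λ(a) = -q₋(a) q₊'(a)` and `Λ'(a) = -q₋(a) q₊''(a) + 2ζ q₋(a) q₊'(a)`, so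
`2ζ + Λ'(a)/Λ(a) = q₊''(a)/q₊'(a)`. Writing `q₊ = (X - a) P`, this ratio is `2 P'(a)/P(a)`,
twice the logarithmic derivative of `P = ∏_{m ≠ ℓ} (X - w_m)` at `a`.
-/

theorem eval_derivative_div_eval_prod_X_sub_C {K ι : Type*} [Field K] (s : Finset ι) (w : ι → K)
    {a : K} (ha : ∀ i ∈ s, a ≠ w i) :
    (derivative (∏ i ∈ s, (X - C (w i)))).eval a / (∏ i ∈ s, (X - C (w i))).eval a
      = ∑ i ∈ s, 1 / (a - w i) := by
  have hroots : (∏ i ∈ s, (X - C (w i))).roots = s.val.map w := by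
    have h := roots_multiset_prod_X_sub_C (s.val.map w)
    rwa [Multiset.map_map] at h
  rw [(Splits.prod fun i _ => Splits.X_sub_C (w i)).eval_derivative_div_eval_of_ne_zero
    (by simpa [eval_prod, Finset.prod_ne_zero_iff, sub_ne_zero] using ha), hroots,
    Multiset.map_map]
  rfl

theorem eval_derivative_X_sub_C_mul {R : Type*} [CommRing R] (a : R) (P : R[X]) :
    (derivative ((X - C a) * P)).eval a = P.eval a := by
  simp [derivative_mul]

theorem eval_derivative_derivative_X_sub_C_mul {R : Type*} [CommRing R] (a : R) (P : R[X]) :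
    (derivative (derivative ((X - C a) * P))).eval a = 2 * (derivative P).eval a := by
  simp [derivative_mul]; ring

theorem add_eval_derivative_div_eval_of_qq {K : Type*} [Field K] {c : K} {Λ qp qm : K[X]}
    (hqq : derivative qm * qp - qm * derivative qp + C c * (qm * qp) = Λ) {a : K}
    (hqp : qp.eval a = 0) (hΛ : Λ.eval a ≠ 0) :
    c + (derivative Λ).eval a / Λ.eval a
      = (derivative (derivative qp)).eval a / (derivative qp).eval a := by
  have hΛa : Λ.eval a = -(qm.eval a * (derivative qp).eval a) := by
    simp [← hqq, hqp]
  have hΛ'a : (derivative Λ).eval a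
      = -(qm.eval a * (derivative (derivative qp)).eval a)
        + c * (qm.eval a * (derivative qp).eval a) := by
    simp [← hqq, derivative_mul, hqp]
  rw [hΛ'a, hΛa]
  rw [hΛa] at hΛ
  have hqm : qm.eval a ≠ 0 := by rintro h; simp [h] at hΛ
  have hqp' : (derivative qp).eval a ≠ 0 := by rintro h; simp [h] at hΛ
  field_simp
  ring

/-- Nondegenerate solutions of the sl(2) qq-system satisfy the sl(2) Gaudin
Bethe equations. -/
theorem sl2_qq_implies_bethe (ζ : ℂ) (Λ : Polynomial ℂ) (N : ℕ)
    (w : Fin N → ℂ) (hw : Function.Injective w) (qp : Polynomial ℂ)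
    (hq : qp = ∏ m : Fin N, (X - C (w m)))
    (hΛ : ∀ ℓ : Fin N, Λ.eval (w ℓ) ≠ 0) (qm : Polynomial ℂ)
    (hqq : derivative qm * qp - qm * derivative qp + C (2 * ζ) * (qm * qp) = Λ) :
    ∀ ℓ : Fin N,
      2 * ζ + (derivative Λ).eval (w ℓ) / Λ.eval (w ℓ)
        = ∑ m ∈ Finset.univ.erase ℓ, 2 / (w ℓ - w m) := by
  intro ℓ
  have hqp : qp = (X - C (w ℓ)) * ∏ m ∈ univ.erase ℓ, (X - C (w m)) := by
    rw [hq, mul_prod_erase univ (fun m => X - C (w m)) (mem_univ ℓ)]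
  have hsep : ∀ m ∈ univ.erase ℓ, w ℓ ≠ w m := fun m hm => hw.ne (ne_of_mem_erase hm).symm
  rw [add_eval_derivative_div_eval_of_qq hqq (by simp [hqp]) (hΛ ℓ), hqp,
    eval_derivative_derivative_X_sub_C_mul, eval_derivative_X_sub_C_mul, mul_div_assoc,
    eval_derivative_div_eval_prod_X_sub_C _ _ hsep, mul_sum]
  simp only [mul_one_div]
end

section
/- Let ζ ∈ ℂ, ζ ≠ 0, let q₊(z) = ∏_{m=1}^{N}(z − w_m) be a polynomial over ℂ with pairwise distinct roots, and let Λ be a polynomial with Λ(w_ℓ) ≠ 0 for all ℓ. If the Bethe equations 2ζ + Λ′(w_ℓ)/Λ(w_ℓ) = ∑_{m ≠ ℓ} 2/(w_ℓ − w_m) hold for every ℓ, then there exists a polynomial q₋ over ℂ satisfying q₋′q₊ − q₋q₊′ + 2ζ q₋q₊ = Λ. -/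
/-!
Choose `q₀` with `q₀(w_ℓ) q₊′(w_ℓ) = -Λ(w_ℓ)` by Lagrange interpolation. Then
`Λ - (W(q₀, q₊) + c q₀ q₊)` vanishes at every `w_ℓ`, and since
`q₊″(w_ℓ)/q₊′(w_ℓ) = ∑_{m ≠ ℓ} 2/(w_ℓ - w_m)`, the Bethe equations say exactly that its derivative
vanishes there too. Hence it equals `q₊² S`, and as `W(q₊ t, q₊) + c q₊ t q₊ = q₊² (t′ + c t)`, it
remains to solve `t′ + c t = S`, which is possible for `c ≠ 0` by induction on the degree of `S`.
-/

open Polynomial Finset Lagrange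

namespace Polynomial

section CommRing

variable {R : Type*} [CommRing R]

lemma X_sub_C_sq_dvd_of_isRoot_of_isRoot_derivative {p : R[X]} {a : R} (h₀ : p.IsRoot a)
    (h₁ : (derivative p).IsRoot a) : (X - C a) ^ 2 ∣ p := by
  rcases eq_or_ne p 0 with rfl | hp
  · exact dvd_zero _
  · exact (le_rootMultiplicity_iff hp).1 ((one_lt_rootMultiplicity_iff_isRoot hp).2 ⟨h₀, h₁⟩)

/-- `qqOperator c q₊ q₋` is the left side `W(q₋, q₊) + c q₋ q₊` of the qq-system. -/
noncomputable def qqOperator (c : R) (p q : R[X]) : R[X] :=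
  derivative q * p - q * derivative p + C c * (q * p)

lemma qqOperator_add (c : R) (p q₁ q₂ : R[X]) :
    qqOperator c p (q₁ + q₂) = qqOperator c p q₁ + qqOperator c p q₂ := by
  simp only [qqOperator, derivative_add]
  ring

lemma qqOperator_mul_self (c : R) (p t : R[X]) :
    qqOperator c p (p * t) = p ^ 2 * (derivative t + C c * t) := by
  simp only [qqOperator, derivative_mul]
  ring

variable {c a : R} {p : R[X]}

lemma eval_qqOperator_of_isRoot (hp : p.IsRoot a) (q : R[X]) :
    (qqOperator c p q).eval a = -(q.eval a * (derivative p).eval a) := by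
  simp [qqOperator, hp.eq_zero]

lemma eval_derivative_qqOperator_of_isRoot (hp : p.IsRoot a) (q : R[X]) :
    (derivative (qqOperator c p q)).eval a =
      q.eval a * (c * (derivative p).eval a - (derivative (derivative p)).eval a) := by
  simp only [qqOperator, derivative_add, derivative_sub, derivative_mul, derivative_C, zero_mul,
    zero_add, eval_add, eval_sub, eval_mul, eval_C, hp.eq_zero]
  ring

end CommRing

section Field

variable {K : Type*} [Field K]

theorem exists_derivative_add_C_mul_eq {c : K} (hc : c ≠ 0) (S : K[X]) :
    ∃ t : K[X], derivative t + C c * t = S := by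
  induction hn : S.natDegree using Nat.strong_induction_on generalizing S with
  | _ n ih =>
  obtain ⟨t₁, ht₁⟩ : ∃ t₁ : K[X], derivative t₁ + C c * t₁ = derivative S := by
    by_cases h : S.natDegree = 0
    · exact ⟨0, by simp [derivative_of_natDegree_zero h]⟩
    · exact ih _ (hn ▸ natDegree_derivative_lt h) _ rfl
  refine ⟨C c⁻¹ * (S - t₁), ?_⟩
  have hcc : C c * C c⁻¹ = 1 := by rw [← C_mul, mul_inv_cancel₀ hc, C_1]
  rw [derivative_mul, derivative_C, zero_mul, zero_add, derivative_sub]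
  linear_combination (-C c⁻¹) * ht₁ + S * hcc

theorem exists_qqOperator_eq_of_sq_dvd {c : K} (hc : c ≠ 0) {p q₀ Λ : K[X]}
    (h : p ^ 2 ∣ Λ - qqOperator c p q₀) : ∃ q : K[X], qqOperator c p q = Λ := by
  obtain ⟨S, hS⟩ := h
  obtain ⟨t, ht⟩ := exists_derivative_add_C_mul_eq hc S
  refine ⟨q₀ + p * t, ?_⟩
  rw [qqOperator_add, qqOperator_mul_self, ht, ← hS]
  ring

lemma X_sub_C_sq_dvd_sub_qqOperator {c a : K} {p q Λ : K[X]} (hp : p.IsRoot a)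
    (hp' : (derivative p).eval a ≠ 0) (hq : q.eval a * (derivative p).eval a = -Λ.eval a)
    (hbethe : (derivative p).eval a * (c * Λ.eval a + (derivative Λ).eval a) =
      Λ.eval a * (derivative (derivative p)).eval a) :
    (X - C a) ^ 2 ∣ Λ - qqOperator c p q := by
  apply X_sub_C_sq_dvd_of_isRoot_of_isRoot_derivative
  · rw [IsRoot, eval_sub, eval_qqOperator_of_isRoot hp]
    linear_combination hq
  · rw [IsRoot, derivative_sub, eval_sub, eval_derivative_qqOperator_of_isRoot hp]
    refine mul_left_cancel₀ hp' ?_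
    linear_combination
      hbethe - (c * (derivative p).eval a - (derivative (derivative p)).eval a) * hq

end Field

end Polynomial

namespace Lagrange

variable {K ι : Type*} [Field K] {s : Finset ι} {v : ι → K} {i : ι}

lemma eval_derivative_nodal_ne_zero [DecidableEq ι] (hvs : Set.InjOn v s) (hi : i ∈ s) :
    (derivative (nodal s v)).eval (v i) ≠ 0 := by
  simpa [nodalWeight_eq_eval_derivative_nodal hi] using nodalWeight_ne_zero hvs hi

lemma eval_derivative_nodal [DecidableEq ι] {x : K} (hx : ∀ i ∈ s, x ≠ v i) :
    (derivative (nodal s v)).eval x = (nodal s v).eval x * ∑ i ∈ s, (x - v i)⁻¹ := by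
  rw [derivative_nodal, eval_finsetSum, mul_sum]
  refine sum_congr rfl fun i hi => ?_
  rw [nodal_eq_mul_nodal_erase hi, eval_mul, eval_sub, eval_X, eval_C, mul_comm (x - v i),
    mul_inv_cancel_right₀ (sub_ne_zero.2 (hx i hi))]

lemma eval_derivative_derivative_nodal_at_node [DecidableEq ι] (hvs : Set.InjOn v s) (hi : i ∈ s) :
    (derivative (derivative (nodal s v))).eval (v i) =
      (derivative (nodal s v)).eval (v i) * ∑ j ∈ s.erase i, 2 / (v i - v j) := by
  have hnode : ∀ j ∈ s.erase i, v i ≠ v j := fun j hj h =>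
    (ne_of_mem_erase hj) (hvs (mem_of_mem_erase hj) hi h.symm)
  rw [eval_nodal_derivative_eval_node_eq hi, nodal_eq_mul_nodal_erase hi]
  simp only [derivative_mul, derivative_add, derivative_X_sub_C, one_mul, eval_add, eval_mul,
    eval_sub, eval_X, eval_C, sub_self, zero_mul, add_zero]
  rw [eval_derivative_nodal hnode]
  simp only [div_eq_mul_inv, ← mul_sum]
  ring

theorem exists_eval_mul_eval_derivative_nodal_eq [DecidableEq ι] (hvs : Set.InjOn v s) (r : ι → K) :
    ∃ q : K[X], ∀ i ∈ s, q.eval (v i) * (derivative (nodal s v)).eval (v i) = r i :=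
  ⟨interpolate s v fun i => r i / (derivative (nodal s v)).eval (v i), fun i hi => by
    rw [eval_interpolate_at_node _ hvs hi,
      div_mul_cancel₀ _ (eval_derivative_nodal_ne_zero hvs hi)]⟩

lemma nodal_sq_dvd_of_forall (hvs : Set.InjOn v s) {F : K[X]} (h : ∀ i ∈ s, (X - C (v i)) ^ 2 ∣ F) :
    nodal s v ^ 2 ∣ F := by
  rw [nodal_eq, ← prod_pow]
  refine prod_dvd_of_coprime (fun i hi j hj hij => IsCoprime.pow ?_) h
  exact isCoprime_X_sub_C_of_isUnit_sub (sub_ne_zero.2 fun h => hij (hvs hi hj h)).isUnit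

end Lagrange

/-- Converse direction: the Bethe equations imply the existence of a polynomial
`qm` solving the sl(2) qq-system. -/
theorem sl2_bethe_implies_qq (ζ : ℂ) (hζ : ζ ≠ 0) (N : ℕ) (w : Fin N → ℂ)
    (hw : Function.Injective w) (qp : Polynomial ℂ)
    (hq : qp = ∏ m : Fin N, (X - C (w m))) (Λ : Polynomial ℂ)
    (hΛ : ∀ ℓ : Fin N, Λ.eval (w ℓ) ≠ 0)
    (hbethe : ∀ ℓ : Fin N,
      2 * ζ + (derivative Λ).eval (w ℓ) / Λ.eval (w ℓ)
        = ∑ m ∈ Finset.univ.erase ℓ, 2 / (w ℓ - w m)) :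
    ∃ qm : Polynomial ℂ,
      derivative qm * qp - qm * derivative qp + C (2 * ζ) * (qm * qp) = Λ := by
  obtain rfl : qp = nodal univ w := hq.trans (nodal_eq _ _).symm
  have hinj : Set.InjOn w (univ : Finset (Fin N)) := hw.injOn
  have hbethe' : ∀ ℓ ∈ univ,
      (derivative (nodal univ w)).eval (w ℓ) * (2 * ζ * Λ.eval (w ℓ) + (derivative Λ).eval (w ℓ)) =
        Λ.eval (w ℓ) * (derivative (derivative (nodal univ w))).eval (w ℓ) := by
    intro ℓ hℓ
    rw [eval_derivative_derivative_nodal_at_node hinj hℓ, ← hbethe ℓ]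
    field_simp [hΛ ℓ]
  obtain ⟨q₀, hq₀⟩ := exists_eval_mul_eval_derivative_nodal_eq hinj fun ℓ => -Λ.eval (w ℓ)
  have hdvd : nodal univ w ^ 2 ∣ Λ - qqOperator (2 * ζ) (nodal univ w) q₀ :=
    nodal_sq_dvd_of_forall hinj fun ℓ hℓ => X_sub_C_sq_dvd_sub_qqOperator (eval_nodal_at_node hℓ)
      (eval_derivative_nodal_ne_zero hinj hℓ) (hq₀ ℓ hℓ) (hbethe' ℓ hℓ)
  exact exists_qqOperator_eq_of_sq_dvd (mul_ne_zero two_ne_zero hζ) hdvd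
end

section
/- Let u, L, p, q be rational functions in ℂ(z) with p ≠ 0, let ζ ∈ ℂ, and consider the 2×2 matrices A = [[u, L],[0, −u]] and U = [[1, q],[0, 1]]·[[p, 0],[0, p⁻¹]] over ℂ(z). Then the gauge-transformation equation U·A·U⁻¹ − U′·U⁻¹ = [[ζ, 0],[0, −ζ]] holds if and only if u = ζ + p′/p and q′ + 2ζ·q = p²·L. -/
open Matrix

/-!
`U` factors as a unipotent matrix times a diagonal one, and the gauge action is a group action
because `(g h)′ = g′ h + g h′`. Gauging `∂ + [[u, L], [0, -u]]` by `diag(p, p⁻¹)` gives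
`[[v, p²L], [0, -v]]` with `v = u - p′/p`, and gauging that by `[[1, q], [0, 1]]` gives
`[[v, p²L - 2qv - q′], [0, -v]]`. Comparing with `diag(ζ, -ζ)` entrywise yields both conditions.
-/

section GaugeAction

variable {R S : Type*} [CommRing R] [CommRing S] [Algebra R S] {n : Type*} [Fintype n]

theorem Matrix.map_derivation_mul (D : Derivation R S S) (g h : Matrix n n S) :
    (g * h).map D = g.map D * h + g * h.map D := by
  ext i j
  simp [mul_apply, Derivation.leibniz, Finset.sum_add_distrib, add_comm, mul_comm]

variable [DecidableEq n]

/-- Conjugating the connection `∂ + A` by `g` gives `∂ + gaugeAction D g A`. -/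
noncomputable def gaugeAction (D : Derivation R S S) (g A : Matrix n n S) : Matrix n n S :=
  g * A * g⁻¹ - g.map D * g⁻¹

theorem gaugeAction_mul (D : Derivation R S S) (g h A : Matrix n n S) (hh : IsUnit h.det) :
    gaugeAction D (g * h) A = gaugeAction D g (gaugeAction D h A) := by
  have hg' : g.map D * h * (h⁻¹ * g⁻¹) = g.map D * g⁻¹ := by
    rw [Matrix.mul_assoc, ← Matrix.mul_assoc h, mul_nonsing_inv h hh, Matrix.one_mul]
  rw [gaugeAction, gaugeAction, gaugeAction, Matrix.map_derivation_mul, Matrix.mul_inv_rev,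
    Matrix.add_mul, hg']
  simp only [Matrix.mul_sub, Matrix.sub_mul, Matrix.mul_assoc]
  abel

end GaugeAction

section SL2

variable {R : Type*} [CommRing R]

theorem gaugeAction_unitriangular {S : Type*} [CommRing S] [Algebra R S]
    (D : Derivation R S S) (q v M : S) :
    gaugeAction D !![1, q; 0, 1] !![v, M; 0, -v] = !![v, M - 2 * q * v - D q; 0, -v] := by
  have hinv : (!![1, q; 0, 1] : Matrix (Fin 2) (Fin 2) S)⁻¹ = !![1, -q; 0, 1] :=
    inv_eq_right_inv (by simp [one_fin_two])
  rw [gaugeAction, hinv]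
  ext i j
  fin_cases i <;> fin_cases j <;> simp [mul_apply, Fin.sum_univ_two]
  ring

theorem gaugeAction_diagonal {K : Type*} [Field K] [Algebra R K]
    (D : Derivation R K K) {p : K} (hp : p ≠ 0) (u L : K) :
    gaugeAction D !![p, 0; 0, p⁻¹] !![u, L; 0, -u]
      = !![u - D p / p, p ^ 2 * L; 0, -(u - D p / p)] := by
  have hinv : (!![p, 0; 0, p⁻¹] : Matrix (Fin 2) (Fin 2) K)⁻¹ = !![p⁻¹, 0; 0, p] :=
    inv_eq_right_inv (by simp [one_fin_two, hp])
  rw [gaugeAction, hinv]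
  ext i j
  fin_cases i <;> fin_cases j <;> simp [mul_apply, Fin.sum_univ_two, Derivation.leibniz_inv]
  all_goals field_simp
  ring

theorem Matrix.traceless_upperTriangular_eq_iff {α : Type*} [AddGroup α] (a b c : α) :
    !![a, b; 0, -a] = !![c, 0; 0, -c] ↔ a = c ∧ b = 0 := by
  simp [and_comm]

end SL2

theorem sl2_ztwisted_gauge_iff_general
    (D : Derivation ℂ (RatFunc ℂ) (RatFunc ℂ))
    (u L p q : RatFunc ℂ) (hp : p ≠ 0) (ζ : ℂ) :
    letI A : Matrix (Fin 2) (Fin 2) (RatFunc ℂ) := !![u, L; 0, -u]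
    letI U : Matrix (Fin 2) (Fin 2) (RatFunc ℂ) :=
      !![1, q; 0, 1] * !![p, 0; 0, p⁻¹]
    (U * A * U⁻¹ - U.map (⇑D) * U⁻¹ = !![RatFunc.C ζ, 0; 0, -RatFunc.C ζ])
      ↔ (u = RatFunc.C ζ + D p / p
          ∧ D q + RatFunc.C (2 * ζ) * q = p ^ 2 * L) := by
  have hdiag : IsUnit (!![p, 0; 0, p⁻¹] : Matrix (Fin 2) (Fin 2) (RatFunc ℂ)).det := by
    simp [det_fin_two, hp]
  change gaugeAction D (!![1, q; 0, 1] * !![p, 0; 0, p⁻¹]) !![u, L; 0, -u] = _ ↔ _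
  rw [gaugeAction_mul D _ _ _ hdiag, gaugeAction_diagonal D hp, gaugeAction_unitriangular,
    Matrix.traceless_upperTriangular_eq_iff, map_mul, map_ofNat, sub_eq_iff_eq_add]
  refine and_congr_right fun hu => ?_
  subst hu
  constructor <;> intro h <;> linear_combination -h

/-- The Z-twisted gauge equation for the Miura SL(2)-oper connection
`∂_z + [[u,L],[0,-u]]` under `U = [[1,q],[0,1]]·[[p,0],[0,p⁻¹]]` holds iff
`u = ζ + p′/p` and `q′ + 2ζq = p²·L`. -/
theorem sl2_ztwisted_gauge_iff
    (D : Derivation ℂ (RatFunc ℂ) (RatFunc ℂ))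
    (hD : ∀ f : Polynomial ℂ,
      D (algebraMap (Polynomial ℂ) (RatFunc ℂ) f)
        = algebraMap (Polynomial ℂ) (RatFunc ℂ) (Polynomial.derivative f))
    (u L p q : RatFunc ℂ) (hp : p ≠ 0) (ζ : ℂ) :
    letI A : Matrix (Fin 2) (Fin 2) (RatFunc ℂ) := !![u, L; 0, -u]
    letI U : Matrix (Fin 2) (Fin 2) (RatFunc ℂ) :=
      !![1, q; 0, 1] * !![p, 0; 0, p⁻¹]
    (U * A * U⁻¹ - U.map (⇑D) * U⁻¹ = !![RatFunc.C ζ, 0; 0, -RatFunc.C ζ])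
      ↔ (u = RatFunc.C ζ + D p / p
          ∧ D q + RatFunc.C (2 * ζ) * q = p ^ 2 * L) :=
  sl2_ztwisted_gauge_iff_general D u L p q hp ζ
end

section
/- Let ζ ≠ 0, let L be a nonzero polynomial over ℂ, and set Λ = L². Suppose q₊ = ∏_{m=1}^N (z − w_m) has pairwise distinct roots with L(w_ℓ) ≠ 0 for all ℓ, and q₋ is a polynomial with q₋′q₊ − q₋q₊′ + 2ζ q₋q₊ = L². Then the roots satisfy the osp(1|2) Gaudin Bethe equations: for every ℓ, ζ + L′(w_ℓ)/L(w_ℓ) = ∑_{m≠ℓ} 1/(w_ℓ − w_m). -/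
open Polynomial Finset

/-!
At a root `a` of `q₊`, the qq-relation and its derivative give `Λ(a) = -q₋(a) q₊'(a)` and
`Λ'(a) = q₋(a) (2ζ q₊'(a) - q₊''(a))`, so `Λ'(a)/Λ(a) = q₊''(a)/q₊'(a) - 2ζ`. For `Λ = L²` the
left side is `2 L'(a)/L(a)`, and writing `q₊ = (z - a) r` with `r(a) ≠ 0` gives
`q₊''(a)/q₊'(a) = 2 r'(a)/r(a) = 2 ∑_{m ≠ ℓ} 1/(a - w_m)`.
-/

namespace Polynomial

section CommRing

variable {R : Type*} [CommRing R]

theorem eval_derivative_X_sub_C_mul_self (a : R) (r : R[X]) :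
    (derivative ((X - C a) * r)).eval a = r.eval a := by
  simp [derivative_mul]

theorem eval_derivative_derivative_X_sub_C_mul_self (a : R) (r : R[X]) :
    (derivative (derivative ((X - C a) * r))).eval a = 2 * (derivative r).eval a := by
  simp only [derivative_mul, derivative_sub, derivative_X, derivative_C, sub_zero, one_mul,
    derivative_add, eval_add, eval_mul, eval_sub, eval_X, eval_C, sub_self, zero_mul, add_zero]
  ring

theorem eval_derivative_mul_eval_derivative_of_isRoot {p q Λ : R[X]} {c a : R}
    (h : derivative p * q - p * derivative q + C c * (p * q) = Λ) (ha : q.IsRoot a) :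
    (derivative Λ).eval a * (derivative q).eval a
      = Λ.eval a * ((derivative (derivative q)).eval a - c * (derivative q).eval a) := by
  have hΛ : Λ.eval a = -(p.eval a * (derivative q).eval a) := by
    simp [← h, ha.eq_zero]
  have hΛ' : (derivative Λ).eval a
      = p.eval a * (c * (derivative q).eval a - (derivative (derivative q)).eval a) := by
    simp only [← h, derivative_add, derivative_sub, derivative_mul, derivative_C, zero_mul,
      zero_add, eval_add, eval_sub, eval_mul, eval_C, ha.eq_zero]
    ring
  rw [hΛ, hΛ']
  ring

end CommRing

theorem eval_derivative_prod_X_sub_C {K ι : Type*} [Field K] [DecidableEq ι] (s : Finset ι)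
    (f : ι → K) {a : K} (ha : ∀ i ∈ s, f i ≠ a) :
    (derivative (∏ i ∈ s, (X - C (f i)))).eval a
      = (∏ i ∈ s, (a - f i)) * ∑ i ∈ s, 1 / (a - f i) := by
  simp only [derivative_prod_finset, derivative_X_sub_C, mul_one, eval_finsetSum, eval_prod,
    eval_sub, eval_X, eval_C, mul_sum]
  refine sum_congr rfl fun i hi => ?_
  have hai : a - f i ≠ 0 := sub_ne_zero.2 (ha i hi).symm
  rw [← mul_prod_erase s _ hi]
  field_simp

end Polynomial

theorem osp12_bethe_general (ζ : ℂ) (L : Polynomial ℂ)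
    (N : ℕ) (w : Fin N → ℂ) (hw : Function.Injective w) (qp : Polynomial ℂ)
    (hq : qp = ∏ m : Fin N, (X - C (w m)))
    (hLw : ∀ ℓ : Fin N, L.eval (w ℓ) ≠ 0) (qm : Polynomial ℂ)
    (hqq : derivative qm * qp - qm * derivative qp + C (2 * ζ) * (qm * qp)
        = L ^ 2) :
    ∀ ℓ : Fin N,
      ζ + (derivative L).eval (w ℓ) / L.eval (w ℓ)
        = ∑ m ∈ Finset.univ.erase ℓ, 1 / (w ℓ - w m) := by
  intro ℓ
  set S := ∑ m ∈ univ.erase ℓ, 1 / (w ℓ - w m)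
  set r := ∏ m ∈ univ.erase ℓ, (X - C (w m))
  have hne : ∀ m ∈ univ.erase ℓ, w m ≠ w ℓ := fun m hm h => (mem_erase.1 hm).1 (hw h)
  have hqp : qp = (X - C (w ℓ)) * r := by rw [hq, ← mul_prod_erase _ _ (mem_univ ℓ)]
  have hr : r.eval (w ℓ) ≠ 0 := by
    simp only [r, eval_prod, eval_sub, eval_X, eval_C]
    exact prod_ne_zero_iff.2 fun m hm => sub_ne_zero.2 (hne m hm).symm
  have hr' : (derivative r).eval (w ℓ) = r.eval (w ℓ) * S := by
    rw [eval_derivative_prod_X_sub_C _ _ hne]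
    simp only [r, eval_prod, eval_sub, eval_X, eval_C]
    rfl
  have key := eval_derivative_mul_eval_derivative_of_isRoot (a := w ℓ) hqq (by simp [hqp])
  rw [hqp, eval_derivative_X_sub_C_mul_self, eval_derivative_derivative_X_sub_C_mul_self, hr',
    derivative_sq] at key
  simp only [eval_mul, eval_pow, eval_C] at key
  have hL' : (derivative L).eval (w ℓ) = L.eval (w ℓ) * (S - ζ) :=
    mul_left_cancel₀ (mul_ne_zero (hLw ℓ) hr) (by linear_combination key / 2)
  rw [hL', mul_div_cancel_left₀ _ (hLw ℓ)]
  ring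

/-- Nondegenerate solutions of the sl(2) qq-system with `Λ = L²` satisfy the
osp(1|2) Gaudin Bethe equations. -/
theorem osp12_bethe (ζ : ℂ) (hζ : ζ ≠ 0) (L : Polynomial ℂ) (hL : L ≠ 0)
    (N : ℕ) (w : Fin N → ℂ) (hw : Function.Injective w) (qp : Polynomial ℂ)
    (hq : qp = ∏ m : Fin N, (X - C (w m)))
    (hLw : ∀ ℓ : Fin N, L.eval (w ℓ) ≠ 0) (qm : Polynomial ℂ)
    (hqq : derivative qm * qp - qm * derivative qp + C (2 * ζ) * (qm * qp)
        = L ^ 2) :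
    ∀ ℓ : Fin N,
      ζ + (derivative L).eval (w ℓ) / L.eval (w ℓ)
        = ∑ m ∈ Finset.univ.erase ℓ, 1 / (w ℓ - w m) :=
  osp12_bethe_general ζ L N w hw qp hq hLw qm hqq
end
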